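/- Any two Λ-interleavings (M, N, φ, ψ) and (M, N, φ', ψ') of the same pair M, N of representations are themselves Λ̃-interleaved, where Λ̃ is the twisted translation of Σ_Λ P induced by Λ. Explicitly, Φ = (φ, ψ') and Ψ = (ψ, φ') form a Λ̃-interleaving pair between the corresponding representations of Σ_Λ P. -/

import Mathlib

open CategoryTheory

/-- A translation of a proset `P`, bundled. -/
structure Translation (P : Type) [Preorder P] where
  toFun : P → P
  mono : Monotone toFun
  le_self : ∀ x, x ≤ toFun x

variable {P : Type} [Preorder P]

/-- The shoelace `Σ_Λ P`: two copies of `P`. -/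
def Shoe (T : Translation P) : Type := P ⊕ P

/-- The left copy of `P` inside `Σ_Λ P`. -/
def Shoe.l {T : Translation P} (i : P) : Shoe T := Sum.inl i

/-- The right copy of `P` inside `Σ_Λ P` (the "primed" copy). -/
def Shoe.r {T : Translation P} (i : P) : Shoe T := Sum.inr i

/-- The shoelace preorder. -/
instance {T : Translation P} : Preorder (Shoe T) where
  le x y := match x, y with
    | Sum.inl i, Sum.inl j => i ≤ j
    | Sum.inr i, Sum.inr j => i ≤ j
    | Sum.inl i, Sum.inr j => T.toFun i ≤ j
    | Sum.inr i, Sum.inl j => T.toFun i ≤ j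
  le_refl x := by cases x <;> exact le_refl _
  le_trans x y z h1 h2 := by
    rcases x with i | i <;> rcases y with j | j <;> rcases z with k | k
    · exact le_trans h1 h2
    · exact le_trans (T.mono h1) h2
    · exact le_trans (T.le_self i) (le_trans h1 (le_trans (T.le_self j) h2))
    · exact le_trans h1 h2
    · exact le_trans h1 h2
    · exact le_trans (T.le_self i) (le_trans h1 (le_trans (T.le_self j) h2))
    · exact le_trans (T.mono h1) h2
    · exact le_trans h1 h2

lemma Shoe.l_le_l {T : Translation P} {i j : P} (h : i ≤ j) :
    (Shoe.l i : Shoe T) ≤ Shoe.l j := h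

lemma Shoe.r_le_r {T : Translation P} {i j : P} (h : i ≤ j) :
    (Shoe.r i : Shoe T) ≤ Shoe.r j := h

lemma Shoe.l_le_r {T : Translation P} {i j : P} (h : T.toFun i ≤ j) :
    (Shoe.l i : Shoe T) ≤ Shoe.r j := h

lemma Shoe.r_le_l {T : Translation P} {i j : P} (h : T.toFun i ≤ j) :
    (Shoe.r i : Shoe T) ≤ Shoe.l j := h

variable {D : Type*} [Category D]

/-- A `Λ`-interleaving between representations `M, N : Q ⥤ D` of a proset `Q`,
given componentwise. -/
def IsInterleaving {Q : Type*} [Preorder Q] (Λ : Q → Q)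
    (hmono : Monotone Λ) (hle : ∀ x, x ≤ Λ x) (M N : Q ⥤ D)
    (φ : ∀ x, M.obj x ⟶ N.obj (Λ x)) (ψ : ∀ x, N.obj x ⟶ M.obj (Λ x)) : Prop :=
  (∀ x y (h : x ≤ y), M.map (homOfLE h) ≫ φ y = φ x ≫ N.map (homOfLE (hmono h))) ∧
  (∀ x y (h : x ≤ y), N.map (homOfLE h) ≫ ψ y = ψ x ≫ M.map (homOfLE (hmono h))) ∧
  (∀ x, φ x ≫ ψ (Λ x) = M.map (homOfLE ((hle x).trans (hle (Λ x))))) ∧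
  (∀ x, ψ x ≫ φ (Λ x) = N.map (homOfLE ((hle x).trans (hle (Λ x)))))

section interRep

variable (T : Translation P) (M N : P ⥤ D)
  (φ : ∀ x, M.obj x ⟶ N.obj (T.toFun x)) (ψ : ∀ x, N.obj x ⟶ M.obj (T.toFun x))

/-- Auxiliary map data for the shoelace representation of an interleaving. -/
def interMapAux : ∀ (x y : Shoe T), x ≤ y →
    (Sum.elim M.obj N.obj x ⟶ Sum.elim M.obj N.obj y)
  | Sum.inl _, Sum.inl _, h => M.map (homOfLE h)
  | Sum.inr _, Sum.inr _, h => N.map (homOfLE h)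
  | Sum.inl i, Sum.inr _, h => φ i ≫ N.map (homOfLE h)
  | Sum.inr i, Sum.inl _, h => ψ i ≫ M.map (homOfLE h)

lemma interMapAux_comp (hint : IsInterleaving T.toFun T.mono T.le_self M N φ ψ)
    (x y z : Shoe T) (h1 : x ≤ y) (h2 : y ≤ z) :
    interMapAux T M N φ ψ x z (le_trans h1 h2) =
      interMapAux T M N φ ψ x y h1 ≫ interMapAux T M N φ ψ y z h2 := by
  obtain ⟨natφ, natψ, intφψ, intψφ⟩ := hint
  rcases x with i | i <;> rcases y with j | j <;> rcases z with k | k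
  · change i ≤ j at h1; change j ≤ k at h2
    show M.map (homOfLE (le_trans h1 h2)) = M.map (homOfLE h1) ≫ M.map (homOfLE h2)
    rw [← M.map_comp, homOfLE_comp]
  · change i ≤ j at h1; change T.toFun j ≤ k at h2
    show φ i ≫ N.map (homOfLE (le_trans (T.mono h1) h2)) =
      M.map (homOfLE h1) ≫ φ j ≫ N.map (homOfLE h2)
    rw [reassoc_of% (natφ i j h1)]
    simp only [← Functor.map_comp, homOfLE_comp]
  · change T.toFun i ≤ j at h1; change T.toFun j ≤ k at h2
    show M.map (homOfLE (le_trans (T.le_self i) (le_trans h1 (le_trans (T.le_self j) h2)))) =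
      (φ i ≫ N.map (homOfLE h1)) ≫ ψ j ≫ M.map (homOfLE h2)
    simp only [Category.assoc]
    rw [reassoc_of% (natψ (T.toFun i) j h1), reassoc_of% (intφψ i)]
    simp only [← Functor.map_comp, homOfLE_comp]
  · change T.toFun i ≤ j at h1; change j ≤ k at h2
    show φ i ≫ N.map (homOfLE (le_trans h1 h2)) =
      (φ i ≫ N.map (homOfLE h1)) ≫ N.map (homOfLE h2)
    simp only [Category.assoc, ← Functor.map_comp, homOfLE_comp]
  · change T.toFun i ≤ j at h1; change j ≤ k at h2
    show ψ i ≫ M.map (homOfLE (le_trans h1 h2)) =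
      (ψ i ≫ M.map (homOfLE h1)) ≫ M.map (homOfLE h2)
    simp only [Category.assoc, ← Functor.map_comp, homOfLE_comp]
  · change T.toFun i ≤ j at h1; change T.toFun j ≤ k at h2
    show N.map (homOfLE (le_trans (T.le_self i) (le_trans h1 (le_trans (T.le_self j) h2)))) =
      (ψ i ≫ M.map (homOfLE h1)) ≫ φ j ≫ N.map (homOfLE h2)
    simp only [Category.assoc]
    rw [reassoc_of% (natφ (T.toFun i) j h1), reassoc_of% (intψφ i)]
    simp only [← Functor.map_comp, homOfLE_comp]
  · change i ≤ j at h1; change T.toFun j ≤ k at h2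
    show ψ i ≫ M.map (homOfLE (le_trans (T.mono h1) h2)) =
      N.map (homOfLE h1) ≫ ψ j ≫ M.map (homOfLE h2)
    rw [reassoc_of% (natψ i j h1)]
    simp only [← Functor.map_comp, homOfLE_comp]
  · change i ≤ j at h1; change j ≤ k at h2
    show N.map (homOfLE (le_trans h1 h2)) = N.map (homOfLE h1) ≫ N.map (homOfLE h2)
    rw [← N.map_comp, homOfLE_comp]

/-- The shoelace representation `V : Σ_Λ P ⥤ D` associated to a `Λ`-interleaving
`(M, N, φ, ψ)`: it is `M` on the left copy, `N` on the right copy, and uses `φ`, `ψ`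
to jump across. -/
def interRep (hint : IsInterleaving T.toFun T.mono T.le_self M N φ ψ) :
    Shoe T ⥤ D where
  obj := Sum.elim M.obj N.obj
  map {x y} f := interMapAux T M N φ ψ x y (leOfHom f)
  map_id x := by
    cases x with
    | inl i => exact M.map_id i
    | inr i => exact N.map_id i
  map_comp {x y z} f g :=
    interMapAux_comp T M N φ ψ hint x y z (leOfHom f) (leOfHom g)

end interRep

/-- The twisted translation `Λ̃` of `Σ_Λ P` induced by `Λ` itself:
`i ↦ (Λi)'` and `i' ↦ Λi`. -/
def Translation.twist (T : Translation P) : Translation (Shoe T) where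
  toFun x := match x with
    | Sum.inl i => Shoe.r (T.toFun i)
    | Sum.inr i => Shoe.l (T.toFun i)
  mono := by
    rintro (i | i) (j | j) h
    · exact T.mono h
    · exact T.mono h
    · exact T.mono h
    · exact T.mono h
  le_self := by
    rintro (i | i)
    · exact le_refl (T.toFun i)
    · exact le_refl (T.toFun i)

section twist

variable {T : Translation P} {M N : P ⥤ D}
  {φ φ' : ∀ x, M.obj x ⟶ N.obj (T.toFun x)} {ψ ψ' : ∀ x, N.obj x ⟶ M.obj (T.toFun x)}

/-- The paper's `Φ = (φ, ψ')`; its `Ψ` is `twistHom φ' ψ`. -/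
def twistHom (φ : ∀ x, M.obj x ⟶ N.obj (T.toFun x)) (ψ' : ∀ x, N.obj x ⟶ M.obj (T.toFun x)) :
    ∀ x : Shoe T, Sum.elim M.obj N.obj x ⟶ Sum.elim M.obj N.obj (T.twist.toFun x)
  | Sum.inl i => φ i
  | Sum.inr i => ψ' i

/-- Crossing from the right copy back to the left one uses `ψ` and then `φ`, and `ψ ≫ φΛ`
is the structure map `N η_{ΛΛ}` for every interleaving, so it may be traded for `ψ' ≫ φ'Λ`. -/
lemma twistHom_naturality (h : IsInterleaving T.toFun T.mono T.le_self M N φ ψ)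
    (h' : IsInterleaving T.toFun T.mono T.le_self M N φ' ψ') (x y : Shoe T) (hxy : x ≤ y) :
    (interRep T M N φ ψ h).map (homOfLE hxy) ≫ twistHom φ ψ' y =
      twistHom φ ψ' x ≫ (interRep T M N φ' ψ' h').map (homOfLE (T.twist.mono hxy)) := by
  obtain ⟨natφ, -, -, roundψφ⟩ := h
  obtain ⟨-, natψ', -, roundψφ'⟩ := h'
  rcases x with i | i <;> rcases y with j | j
  · exact natφ i j hxy
  · exact (Category.assoc _ _ _).trans (φ i ≫= natψ' (T.toFun i) j hxy)
  · change (ψ i ≫ M.map (homOfLE hxy)) ≫ φ j = ψ' i ≫ φ' (T.toFun i) ≫ N.map _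
    rw [Category.assoc, natφ (T.toFun i) j hxy, reassoc_of% (roundψφ i),
      reassoc_of% (roundψφ' i)]
  · exact natψ' i j hxy

lemma twistHom_comp_twistHom (h : IsInterleaving T.toFun T.mono T.le_self M N φ ψ)
    (h' : IsInterleaving T.toFun T.mono T.le_self M N φ' ψ') (x : Shoe T) :
    twistHom φ ψ' x ≫ twistHom φ' ψ (T.twist.toFun x) =
      (interRep T M N φ ψ h).map
        (homOfLE ((T.twist.le_self x).trans (T.twist.le_self (T.twist.toFun x)))) := by
  obtain ⟨-, -, roundφψ, -⟩ := h
  obtain ⟨-, -, -, roundψφ'⟩ := h'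
  rcases x with i | i
  · exact roundφψ i
  · exact roundψφ' i

end twist

/-- Any two `Λ`-interleavings `(M, N, φ, ψ)` and `(M, N, φ', ψ')`
of the same pair `M, N` are themselves `Λ̃`-interleaved, where `Λ̃` is the twisted
translation of `Σ_Λ P` induced by `Λ`: explicitly, `Φ = (φ, ψ')` and `Ψ = (ψ, φ')`
form a `Λ̃`-interleaving pair between the corresponding shoelace representations. -/
theorem interleavings_are_twist_interleaved (T : Translation P) (M N : P ⥤ D)
    (φ : ∀ x, M.obj x ⟶ N.obj (T.toFun x)) (ψ : ∀ x, N.obj x ⟶ M.obj (T.toFun x))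
    (φ' : ∀ x, M.obj x ⟶ N.obj (T.toFun x)) (ψ' : ∀ x, N.obj x ⟶ M.obj (T.toFun x))
    (h : IsInterleaving T.toFun T.mono T.le_self M N φ ψ)
    (h' : IsInterleaving T.toFun T.mono T.le_self M N φ' ψ') :
    IsInterleaving (Translation.twist T).toFun (Translation.twist T).mono
      (Translation.twist T).le_self
      (interRep T M N φ ψ h) (interRep T M N φ' ψ' h')
      (fun x => match x with | Sum.inl i => φ i | Sum.inr i => ψ' i)
      (fun x => match x with | Sum.inl i => φ' i | Sum.inr i => ψ i) :=
  ⟨twistHom_naturality h h', twistHom_naturality h' h,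
    twistHom_comp_twistHom h h', twistHom_comp_twistHom h' h⟩
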